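/- If (x_n) is a sequence of positive reals decreasing to zero, then the random dive MH kernels K(x_n,·) converge weakly to the point mass δ₀ at zero; i.e., for every y < 0, K(x_n,(-∞,y]) → 0 and for every y > 0, K(x_n,(y,∞)) → 0 as n → ∞. -/

import Mathlib

/-!
Away from `0`, a move from `x` to `z` with `|x| < |z|` has proposal density
`(1/2) g(x/z) |x|/z²`, so the substitution `ε = x/z` bounds the kernel mass of any set
`A ⊆ {|z| ≥ r}` by `(1/2) ∫ g` over `[-|x|/r, |x|/r]`. As `x → 0` this interval shrinks to a
null set, and absolute continuity of the integral of `g` forces the bound to `0`.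
-/

open MeasureTheory Set Filter

/-- The random dive MH proposal kernel density. -/
noncomputable def rdmhProposal (g : ℝ → ℝ) (x y : ℝ) : ℝ :=
  if |y| < |x| then (1 / 2) * g (y / x) * (1 / |x|)
  else if |x| < |y| then (1 / 2) * g (x / y) * (|x| / y ^ 2)
  else 0

/-- The Metropolis–Hastings acceptance probability for the RDMH proposal. -/
noncomputable def rdmhAccept (g π : ℝ → ℝ) (x y : ℝ) : ℝ :=
  min (π y * rdmhProposal g y x / (π x * rdmhProposal g x y)) 1

/-- The random dive MH transition kernel: continuous (accepted-move) part plus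
the rejection mass at the current state. -/
noncomputable def rdmhKernel (g π : ℝ → ℝ) (x : ℝ) (A : Set ℝ) : ℝ :=
  (∫ y in A, rdmhProposal g x y * rdmhAccept g π x y) +
    (1 - ∫ y in ({0}ᶜ : Set ℝ), rdmhProposal g x y * rdmhAccept g π x y) *
      Set.indicator A (fun _ => (1 : ℝ)) x

lemma rdmhProposal_nonneg {g : ℝ → ℝ} (hg : ∀ ε, 0 ≤ g ε) (x y : ℝ) :
    0 ≤ rdmhProposal g x y := by
  unfold rdmhProposal
  split_ifs <;> positivity [hg (y / x), hg (x / y)]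

lemma rdmhAccept_nonneg {g π : ℝ → ℝ} (hg : ∀ ε, 0 ≤ g ε) (hπ : ∀ z, 0 < π z) (x y : ℝ) :
    0 ≤ rdmhAccept g π x y :=
  le_min (div_nonneg (mul_nonneg (hπ y).le (rdmhProposal_nonneg hg y x))
    (mul_nonneg (hπ x).le (rdmhProposal_nonneg hg x y))) zero_le_one

lemma rdmhAccept_le_one (g π : ℝ → ℝ) (x y : ℝ) : rdmhAccept g π x y ≤ 1 :=
  min_le_right _ _

lemma rdmhKernel_of_notMem {g π : ℝ → ℝ} {x : ℝ} {A : Set ℝ} (hx : x ∉ A) :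
    rdmhKernel g π x A = ∫ y in A, rdmhProposal g x y * rdmhAccept g π x y := by
  simp [rdmhKernel, hx]

lemma rdmhProposal_of_abs_lt (g : ℝ → ℝ) {x z : ℝ} (h : |x| < |z|) :
    rdmhProposal g x z = |-(x / z ^ 2)| * ((1 / 2) * g (x / z)) := by
  rw [rdmhProposal, if_neg h.not_gt, if_pos h, abs_neg, abs_div, abs_of_nonneg (sq_nonneg z)]
  ring

lemma hasDerivAt_const_div (x : ℝ) {z : ℝ} (hz : z ≠ 0) :
    HasDerivAt (fun z => x / z) (-(x / z ^ 2)) z := by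
  simpa [div_eq_mul_inv] using (hasDerivAt_inv hz).const_mul x

lemma injective_const_div {x : ℝ} (hx : x ≠ 0) : Function.Injective fun z : ℝ => x / z :=
  fun _ _ h => inv_injective (mul_left_cancel₀ hx h)

/-- Change of variables `ε = x / z` in the proposal density. -/
lemma setIntegral_rdmhProposal_mul_rdmhAccept_le {g π : ℝ → ℝ} (hg_nonneg : ∀ ε, 0 ≤ g ε)
    (hg : Integrable g) (hπ : ∀ z, 0 < π z) {x : ℝ} (hx : x ≠ 0) {s T : Set ℝ}
    (hs : MeasurableSet s) (hsx : ∀ z ∈ s, |x| < |z|) (hsT : MapsTo (fun z => x / z) s T) :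
    ∫ z in s, rdmhProposal g x z * rdmhAccept g π x z ≤ (1 / 2) * ∫ ε in T, g ε := by
  have hderiv : ∀ z ∈ s, HasDerivWithinAt (fun z => x / z) (-(x / z ^ 2)) s z := fun z hz =>
    (hasDerivAt_const_div x (abs_pos.1 ((abs_nonneg x).trans_lt (hsx z hz)))).hasDerivWithinAt
  have hinj : InjOn (fun z => x / z) s := (injective_const_div hx).injOn
  have hprop : EqOn (rdmhProposal g x) (fun z => |-(x / z ^ 2)| • ((1 / 2) * g (x / z))) s :=
    fun z hz => rdmhProposal_of_abs_lt g (hsx z hz)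
  have hprop_int : IntegrableOn (rdmhProposal g x) s :=
    ((integrableOn_image_iff_integrableOn_abs_deriv_smul hs hderiv hinj _).1
      (hg.const_mul (1 / 2)).integrableOn).congr_fun hprop.symm hs
  calc ∫ z in s, rdmhProposal g x z * rdmhAccept g π x z
      ≤ ∫ z in s, rdmhProposal g x z :=
        integral_mono_of_nonneg (.of_forall fun z => mul_nonneg (rdmhProposal_nonneg hg_nonneg _ _)
            (rdmhAccept_nonneg hg_nonneg hπ _ _)) hprop_int
          (.of_forall fun z => mul_le_of_le_one_right (rdmhProposal_nonneg hg_nonneg _ _)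
            (rdmhAccept_le_one _ _ _ _))
    _ = ∫ ε in (fun z => x / z) '' s, (1 / 2) * g ε := by
        rw [setIntegral_congr_fun hs hprop,
          integral_image_eq_integral_abs_deriv_smul hs hderiv hinj]
    _ ≤ ∫ ε in T, (1 / 2) * g ε :=
        setIntegral_mono_set (hg.const_mul _).integrableOn
          (.of_forall fun ε => mul_nonneg (by norm_num) (hg_nonneg ε))
          (hsT.image_subset).eventuallyLE
    _ = (1 / 2) * ∫ ε in T, g ε := integral_const_mul _ _

theorem tendsto_rdmhKernel_nhds_zero {ι : Type*} {l : Filter ι} {g π : ℝ → ℝ}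
    (hg_nonneg : ∀ ε, 0 ≤ g ε) (hg : Integrable g) (hπ : ∀ z, 0 < π z) {A : Set ℝ}
    (hA : MeasurableSet A) {r : ℝ} (hr : 0 < r) (hAr : ∀ z ∈ A, r ≤ |z|) {x : ι → ℝ}
    (hx0 : ∀ i, x i ≠ 0) (hx : Tendsto x l (nhds 0)) :
    Tendsto (fun i => rdmhKernel g π (x i) A) l (nhds 0) := by
  set T : ι → Set ℝ := fun i => Icc (-(|x i| / r)) (|x i| / r)
  have hxr : Tendsto (fun i => |x i| / r) l (nhds 0) := by simpa using hx.abs.div_const r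
  have hT : Tendsto (fun i => (1 / 2) * ∫ ε in T i, g ε) l (nhds 0) := by
    have hvol : Tendsto (volume ∘ T) l (nhds 0) := by
      simpa [T, Function.comp_def, Real.volume_Icc] using
        (ENNReal.tendsto_ofReal (hxr.add hxr)).congr fun i => by ring_nf
    simpa using (hg.tendsto_setIntegral_nhds_zero hvol).const_mul (1 / 2 : ℝ)
  have hAx : ∀ᶠ i in l, ∀ z ∈ A, |x i| < |z| :=
    (hx.abs.eventually_lt_const (by simpa using hr)).mono fun i hi z hz => hi.trans_le (hAr z hz)
  have hK : ∀ᶠ i in l,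
      rdmhKernel g π (x i) A = ∫ z in A, rdmhProposal g (x i) z * rdmhAccept g π (x i) z :=
    hAx.mono fun i hi => rdmhKernel_of_notMem fun hxA => (hi _ hxA).false
  refine tendsto_of_tendsto_of_tendsto_of_le_of_le' tendsto_const_nhds hT ?_ ?_
  · filter_upwards [hK] with i hKi
    rw [hKi]
    exact setIntegral_nonneg hA fun z _ =>
      mul_nonneg (rdmhProposal_nonneg hg_nonneg _ _) (rdmhAccept_nonneg hg_nonneg hπ _ _)
  · filter_upwards [hK, hAx] with i hKi hAxi
    rw [hKi]
    refine setIntegral_rdmhProposal_mul_rdmhAccept_le hg_nonneg hg hπ (hx0 i) hA hAxi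
      fun z hz => abs_le.1 ?_
    rw [abs_div]
    exact div_le_div_of_nonneg_left (abs_nonneg _) hr (hAr z hz)

theorem stmt_8_general (g : ℝ → ℝ) (hg_nonneg : ∀ ε, 0 ≤ g ε)
    (hg_supp : ∀ ε, ε ∉ Ioo (-1 : ℝ) 1 \ {0} → g ε = 0)
    (hg_int : IntegrableOn g (Ioo (-1 : ℝ) 1 \ {0}))
    (π : ℝ → ℝ) (hπ_pos : ∀ z, 0 < π z)
    (x : ℕ → ℝ) (hx_pos : ∀ n, 0 < x n)
    (hx_lim : Tendsto x atTop (nhds 0)) :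
    (∀ y : ℝ, y < 0 →
      Tendsto (fun n => rdmhKernel g π (x n) (Iic y)) atTop (nhds 0)) ∧
    (∀ y : ℝ, 0 < y →
      Tendsto (fun n => rdmhKernel g π (x n) (Ioi y)) atTop (nhds 0)) := by
  have hg : Integrable g := hg_int.integrable_of_forall_notMem_eq_zero hg_supp
  have hx0 : ∀ n, x n ≠ 0 := fun n => (hx_pos n).ne'
  refine ⟨fun y hy => ?_, fun y hy => ?_⟩
  · refine tendsto_rdmhKernel_nhds_zero hg_nonneg hg hπ_pos measurableSet_Iic (neg_pos.2 hy)
      (fun z hz => ?_) hx0 hx_lim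
    rw [abs_of_neg (lt_of_le_of_lt hz hy)]
    exact neg_le_neg hz
  · refine tendsto_rdmhKernel_nhds_zero hg_nonneg hg hπ_pos measurableSet_Ioi hy
      (fun z hz => ?_) hx0 hx_lim
    rw [abs_of_pos (hy.trans hz)]
    exact le_of_lt hz

theorem stmt_8 (g : ℝ → ℝ) (hg_meas : Measurable g) (hg_nonneg : ∀ ε, 0 ≤ g ε)
    (hg_supp : ∀ ε, ε ∉ Ioo (-1 : ℝ) 1 \ {0} → g ε = 0)
    (hg_int : IntegrableOn g (Ioo (-1 : ℝ) 1 \ {0}))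
    (hg_one : ∫ ε in Ioo (-1 : ℝ) 1 \ {0}, g ε = 1)
    (π : ℝ → ℝ) (hπ_pos : ∀ z, 0 < π z)
    (x : ℕ → ℝ) (hx_pos : ∀ n, 0 < x n) (hx_anti : StrictAnti x)
    (hx_lim : Tendsto x atTop (nhds 0)) :
    (∀ y : ℝ, y < 0 →
      Tendsto (fun n => rdmhKernel g π (x n) (Iic y)) atTop (nhds 0)) ∧
    (∀ y : ℝ, 0 < y →
      Tendsto (fun n => rdmhKernel g π (x n) (Ioi y)) atTop (nhds 0)) :=
  stmt_8_general g hg_nonneg hg_supp hg_int π hπ_pos x hx_pos hx_lim
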